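/- arXiv:2601.21601 — 2 statements merged into one kernel-verified Lean document; each statement's English description precedes it below -/
import Mathlib

section
/- Let Q be a set closed under a binary operation ∧ and φ : Q → W a map into a real vector space with W = span{φ_p : p ∈ Q}. Let V be the free real vector space on Q, Φ : V → W the linear extension of φ, and for each q ∈ Q let T_q : V → V be the linear map with T_q(e_p) = e_{p∧q}. Assume (i) T_q(ker Φ) ⊆ ker Φ for all q, and (ii) φ_{p∧q} = φ_{q∧p} for all p, q. Then there exists a unique bilinear map F̃ : W × W → W with F̃(φ_p, φ_q) = φ_{p∧q} for all p, q ∈ Q, and F̃ is symmetric on W × W. -/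
/-!
Write `Φ : (Q →₀ ℝ) → W` for the linear extension of `φ`, which is onto. Stability of `ker Φ`
under `T_q : e_p ↦ e_{p ∧ q}` lets `T_q` descend along `Φ` to `L q : W → W` with
`L q (φ p) = φ (p ∧ q)`. Extending `q ↦ L q` linearly gives a map `(Q →₀ ℝ) → End W`, and
by the symmetry of `φ (p ∧ q)` its value at `v` on `φ p` is `Φ (T_p v)`, so it also vanishes on
`ker Φ` and descends along `Φ` to the required bilinear map. Uniqueness and symmetry hold because
both sides are bilinear and agree on the spanning family `φ`.
-/

open Finsupp

namespace LinearMap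

theorem exists_comp_eq_of_ker_le {R V W M : Type*} [Ring R] [AddCommGroup V] [Module R V]
    [AddCommGroup W] [Module R W] [AddCommGroup M] [Module R M] {Φ : V →ₗ[R] W}
    (hΦ : Function.Surjective Φ) {f : V →ₗ[R] M} (h : ker Φ ≤ ker f) :
    ∃ g : W →ₗ[R] M, g ∘ₗ Φ = f := by
  refine ⟨(ker Φ).liftQ f h ∘ₗ (Φ.quotKerEquivOfSurjective hΦ).symm.toLinearMap, ?_⟩
  ext x
  have : (Φ.quotKerEquivOfSurjective hΦ).symm (Φ x) = (ker Φ).mkQ x :=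
    (LinearEquiv.symm_apply_eq _).2 rfl
  simp [this]

theorem ext_on_range₂ {R M N P ι κ : Type*} [CommSemiring R] [AddCommMonoid M] [Module R M]
    [AddCommMonoid N] [Module R N] [AddCommMonoid P] [Module R P] {v : ι → M} {w : κ → N}
    (hv : Submodule.span R (Set.range v) = ⊤) (hw : Submodule.span R (Set.range w) = ⊤)
    {F G : M →ₗ[R] N →ₗ[R] P} (h : ∀ i j, F (v i) (w j) = G (v i) (w j)) : F = G :=
  ext_on_range hv fun i => ext_on_range hw (h i)

end LinearMap

section

variable {R Q W : Type*} [CommRing R] [AddCommGroup W] [Module R W] {conj : Q → Q → Q} {φ : Q → W}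

theorem linearCombination_surjective_of_span_eq_top
    (hspan : Submodule.span R (Set.range φ) = ⊤) :
    Function.Surjective (linearCombination R φ) := by
  rw [← LinearMap.range_eq_top, range_linearCombination, hspan]

theorem exists_linearMap_apply_eq_conj_right
    (hspan : Submodule.span R (Set.range φ) = ⊤) (q : Q)
    (hq : ∀ v ∈ LinearMap.ker (linearCombination R φ),
      lmapDomain R R (fun p => conj p q) v ∈ LinearMap.ker (linearCombination R φ)) :
    ∃ L : W →ₗ[R] W, ∀ p, L (φ p) = φ (conj p q) := by
  have hsurj := linearCombination_surjective_of_span_eq_top hspan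
  obtain ⟨L, hL⟩ := LinearMap.exists_comp_eq_of_ker_le hsurj
    (f := linearCombination R φ ∘ₗ lmapDomain R R (fun p => conj p q)) hq
  refine ⟨L, fun p => ?_⟩
  simpa [mapDomain_single] using LinearMap.congr_fun hL (single p 1)

theorem exists_bilin_apply_eq_conj
    (hspan : Submodule.span R (Set.range φ) = ⊤)
    (hker : ∀ q : Q, ∀ v ∈ LinearMap.ker (linearCombination R φ),
      lmapDomain R R (fun p => conj p q) v ∈ LinearMap.ker (linearCombination R φ))
    (hsym : ∀ p q : Q, φ (conj p q) = φ (conj q p)) :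
    ∃ F : W →ₗ[R] W →ₗ[R] W, ∀ p q, F (φ p) (φ q) = φ (conj p q) := by
  choose L hL using fun q => exists_linearMap_apply_eq_conj_right hspan q (hker q)
  have hsurj := linearCombination_surjective_of_span_eq_top hspan
  have hG : LinearMap.ker (linearCombination R φ) ≤ LinearMap.ker (linearCombination R L) := by
    intro v hv
    rw [LinearMap.mem_ker]
    refine LinearMap.ext_on_range hspan fun p => ?_
    calc linearCombination R L v (φ p)
        = linearCombination R (fun q => φ (conj q p)) v := by
          simp only [linearCombination_apply, Finsupp.sum, LinearMap.sum_apply,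
            LinearMap.smul_apply, hL, hsym p]
      _ = linearCombination R φ (lmapDomain R R (fun q => conj q p) v) :=
          (linearCombination_mapDomain (f := fun q => conj q p) (l := v)).symm
      _ = 0 := hker p v hv
  obtain ⟨F, hF⟩ := LinearMap.exists_comp_eq_of_ker_le hsurj hG
  refine ⟨F, fun p q => ?_⟩
  simpa [hL, hsym] using LinearMap.congr_fun (LinearMap.congr_fun hF (single p 1)) (φ q)

end

theorem stmt_14 {Q W : Type*} [AddCommGroup W] [Module ℝ W]
    (conj : Q → Q → Q) (φ : Q → W)
    (hspan : Submodule.span ℝ (Set.range φ) = ⊤)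
    (hker : ∀ q : Q, ∀ v ∈ LinearMap.ker (Finsupp.linearCombination ℝ φ),
        Finsupp.lmapDomain ℝ ℝ (fun p => conj p q) v ∈
          LinearMap.ker (Finsupp.linearCombination ℝ φ))
    (hsym : ∀ p q : Q, φ (conj p q) = φ (conj q p)) :
    (∃! F : W →ₗ[ℝ] W →ₗ[ℝ] W, ∀ p q : Q, F (φ p) (φ q) = φ (conj p q)) ∧
    (∀ F : W →ₗ[ℝ] W →ₗ[ℝ] W,
      (∀ p q : Q, F (φ p) (φ q) = φ (conj p q)) → ∀ u v : W, F u v = F v u) := by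
  obtain ⟨F, hF⟩ := exists_bilin_apply_eq_conj hspan hker hsym
  refine ⟨⟨F, hF, fun G hG => LinearMap.ext_on_range₂ hspan hspan fun p q => by rw [hF, hG]⟩, ?_⟩
  intro G hG u v
  have hflip : G = G.flip :=
    LinearMap.ext_on_range₂ hspan hspan fun p q => by rw [LinearMap.flip_apply, hG, hG, hsym]
  exact LinearMap.congr_fun₂ hflip u v
end

section
/- Let Q be a set with an involution ¬ and a binary operation ∧, φ : Q → W a map into a real vector space, and F̃ : W × W → W a bilinear map with F̃(φ_p, φ_q) = φ_{p∧q} for all p, q. Suppose φ_{¬p} = -φ_p for all p and φ_{p∧p} = φ_p for all p. Then φ_q = 0 for every q ∈ Q that is a finite conjunction of elements of Q. In particular, if every element of Q is such a conjunction (e.g., q = q∧q), then φ is identically zero. -/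
/-!
Bilinearity makes `F (-x) (-x) = F x x`, so if both `x` and `-x` are idempotent for `F` then
`-x = x`, which forces `x = 0` in a torsion-free group. Applied to `x = φ q`, whose negative is
`φ (neg q)`, this kills every value of `φ`.
-/

theorem LinearMap.eq_zero_of_self_and_neg_idempotent {R M : Type*} [CommRing R] [AddCommGroup M]
    [Module R M] [IsAddTorsionFree M] (F : M →ₗ[R] M →ₗ[R] M) {x : M}
    (hx : F x x = x) (hnx : F (-x) (-x) = -x) : x = 0 :=
  neg_eq_self.mp <| calc
    -x = F (-x) (-x) := hnx.symm
    _ = F x x := by simp only [map_neg, LinearMap.neg_apply, neg_neg]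
    _ = x := hx

theorem stmt_15_general {Q W : Type*} [AddCommGroup W] [Module ℝ W]
    (neg : Q → Q)
    (conj : Q → Q → Q) (φ : Q → W)
    (F : W →ₗ[ℝ] W →ₗ[ℝ] W)
    (hF : ∀ p q : Q, F (φ p) (φ q) = φ (conj p q))
    (hnegφ : ∀ p : Q, φ (neg p) = -φ p)
    (hidem : ∀ p : Q, φ (conj p p) = φ p) :
    ∀ q : Q, φ q = 0 := by
  have : IsAddTorsionFree W := .of_isTorsionFree ℝ W
  intro q
  apply F.eq_zero_of_self_and_neg_idempotent
  · rw [hF, hidem]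
  · rw [← hnegφ, hF, hidem]

theorem stmt_15 {Q W : Type*} [AddCommGroup W] [Module ℝ W]
    (neg : Q → Q) (hneg : ∀ q, neg (neg q) = q)
    (conj : Q → Q → Q) (φ : Q → W)
    (F : W →ₗ[ℝ] W →ₗ[ℝ] W)
    (hF : ∀ p q : Q, F (φ p) (φ q) = φ (conj p q))
    (hnegφ : ∀ p : Q, φ (neg p) = -φ p)
    (hidem : ∀ p : Q, φ (conj p p) = φ p) :
    ∀ q : Q, φ q = 0 :=
  stmt_15_general neg conj φ F hF hnegφ hidem
end
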